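/- Consider the regularized stable matching game with waiting-list payoffs, where each player m maximizes U_m(x) = ∑_{w∈W} μ_{mw} (1 − ∑_{k >_w m} x_{kw}) x_{mw} − (β/2)‖x_m‖², and let F(x) = (∇_{x_m} U_m(x))_{m∈M}. Then for any two strategy profiles x and x', (x' − x)ᵀ(F(x') − F(x)) = −(1/2) ∑_{w∈W} (x'_w − x_w)ᵀ Q^w (x'_w − x_w), where x_w = (x_{mw})_{m∈M} and, after relabeling the men so that woman w's preference order is 1 >_w 2 >_w … >_w n, Q^w is the symmetric n×n matrix with diagonal entries Q^w_{mm} = 2β and off-diagonal entries Q^w_{mk} = μ_{mw} for k < m (and Q^w_{mk} = μ_{kw} for k > m, by symmetry). In particular, if β > n μ_max/2, then the regularized stable matching game with waiting-list payoffs is a monotone game: (x' − x)ᵀ(F(x') − F(x)) ≤ 0 for all strategy profiles x, x'. -/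

import Mathlib

/-!
The gradient is affine in the profile: `∂U_m/∂x_{mw} = μ_{mw} (1 - ∑_{k >_w m} x_{kw}) - β x_{mw}`.
Hence, with `d = x' - x`, the pairing `(x' - x)ᵀ(F(x') - F(x))` splits over the women into
`-∑_m μ_{mw} d_m ∑_{k >_w m} d_k - β ‖d‖²`, and symmetrizing the first sum produces `Q^w`.
For monotonicity, the off-diagonal part is at most `μ_max ∑_{k >_w m} |d_m| |d_k|`, which is at most
`μ_max (∑_m |d_m|)² / 2 ≤ n μ_max ‖d‖² / 2` by Cauchy–Schwarz; the diagonal `β ‖d‖²` dominates it.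
-/

open Finset Real MeasureTheory

namespace SM

variable {n : ℕ}

/-- The set of men that woman `w` strictly prefers to man `m`
(`rankW w k` is woman `w`'s cardinal ranking score of man `k`;
`k >_w m` iff `rankW w m < rankW w k`). -/
noncomputable def better (rankW : Fin n → Fin n → ℝ) (w m : Fin n) : Finset (Fin n) :=
  Finset.univ.filter fun k => rankW w m < rankW w k

/-- Market assumptions: men's cardinal preferences lie in `(0,1]` with no ties, and each
woman's ranking of the men is strict (injective scores). -/
def MarketHyp (μp rankW : Fin n → Fin n → ℝ) : Prop :=
  (∀ m w, μp m w ∈ Set.Ioc (0:ℝ) 1) ∧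
  (∀ m w w', w ≠ w' → μp m w ≠ μp m w') ∧
  (∀ w, Function.Injective (rankW w))

/-- `v_{mw}(x) = μ_{mw} ∏_{k >_w m} (1 - x_{kw})`. -/
noncomputable def vv (μp rankW : Fin n → Fin n → ℝ) (x : Fin n → Fin n → ℝ) (m w : Fin n) : ℝ :=
  μp m w * ∏ k ∈ better rankW w m, (1 - x k w)

/-- Payoff `u_m(x) = ∑_w v_{mw}(x) x_{mw}` of man `m` in the stable matching game. -/
noncomputable def uu (μp rankW : Fin n → Fin n → ℝ) (x : Fin n → Fin n → ℝ) (m : Fin n) : ℝ :=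
  ∑ w, vv μp rankW x m w * x m w

/-- Mixed strategy: a probability vector over the women. -/
def IsStrategy (y : Fin n → ℝ) : Prop := (∀ w, 0 ≤ y w) ∧ ∑ w, y w = 1

/-- Pure strategy: the indicator vector of a single woman. -/
def IsPure (y : Fin n → ℝ) : Prop := ∃ w₀, y = fun w => if w = w₀ then (1:ℝ) else 0

/-- (Mixed) Nash equilibrium of the stable matching game. -/
def IsNE (μp rankW : Fin n → Fin n → ℝ) (x : Fin n → Fin n → ℝ) : Prop :=
  (∀ m, IsStrategy (x m)) ∧
  ∀ m y, IsStrategy y → uu μp rankW (Function.update x m y) m ≤ uu μp rankW x m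

/-- Pure Nash equilibrium of the stable matching game. -/
def IsPureNE (μp rankW : Fin n → Fin n → ℝ) (x : Fin n → Fin n → ℝ) : Prop :=
  (∀ m, IsPure (x m)) ∧
  ∀ m y, IsPure y → uu μp rankW (Function.update x m y) m ≤ uu μp rankW x m

/-- Characteristic vector of the perfect matching `σ`. -/
def charVec (σ : Equiv.Perm (Fin n)) : Fin n → Fin n → ℝ :=
  fun m w => if w = σ m then 1 else 0

/-- A perfect matching `σ` is stable iff it admits no blocking pair `(m, σ m')`. -/
def IsStableMatching (μp rankW : Fin n → Fin n → ℝ) (σ : Equiv.Perm (Fin n)) : Prop :=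
  ¬ ∃ m m' : Fin n, m ≠ m' ∧ μp m (σ m) < μp m (σ m') ∧ rankW (σ m') m' < rankW (σ m') m

/-- `Δ = min_{m, w ≠ w'} |μ_{mw} - μ_{mw'}|`. -/
noncomputable def gapDelta (μp : Fin n → Fin n → ℝ) : ℝ :=
  sInf {d : ℝ | ∃ m w w' : Fin n, w ≠ w' ∧ d = |μp m w - μp m w'|}

/-- `μ_min = min_{m,w} μ_{mw}`. -/
noncomputable def muMin (μp : Fin n → Fin n → ℝ) : ℝ :=
  sInf {a : ℝ | ∃ m w : Fin n, a = μp m w}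

/-- `μ_max = max_{m,w} μ_{mw}`. -/
noncomputable def muMax (μp : Fin n → Fin n → ℝ) : ℝ :=
  sSup {a : ℝ | ∃ m w : Fin n, a = μp m w}

/-- Entrywise ℓ¹ distance on strategy profiles. -/
noncomputable def l1dist (x y : Fin n → Fin n → ℝ) : ℝ :=
  ∑ m, ∑ w, |x m w - y m w|

/-- The logit (exponential-weights) map. -/
noncomputable def logit (η : ℝ) (L : Fin n → ℝ) (w : Fin n) : ℝ :=
  Real.exp (η * L w) / ∑ w', Real.exp (η * L w')

/-- Waiting-list payoff `u_m(x) = ∑_w μ_{mw} (1 - ∑_{k >_w m} x_{kw}) x_{mw}`. -/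
noncomputable def uWL (μp rankW : Fin n → Fin n → ℝ) (x : Fin n → Fin n → ℝ) (m : Fin n) : ℝ :=
  ∑ w, μp m w * (1 - ∑ k ∈ better rankW w m, x k w) * x m w

/-- Pure Nash equilibrium of the waiting-list stable matching game. -/
def IsPureNEWL (μp rankW : Fin n → Fin n → ℝ) (x : Fin n → Fin n → ℝ) : Prop :=
  (∀ m, IsPure (x m)) ∧
  ∀ m y, IsPure y → uWL μp rankW (Function.update x m y) m ≤ uWL μp rankW x m

/-- (Mixed) Nash equilibrium of the waiting-list stable matching game. -/
def IsNEWL (μp rankW : Fin n → Fin n → ℝ) (x : Fin n → Fin n → ℝ) : Prop :=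
  (∀ m, IsStrategy (x m)) ∧
  ∀ m y, IsStrategy y → uWL μp rankW (Function.update x m y) m ≤ uWL μp rankW x m

/-- Regularized waiting-list payoff `U_m(x) = u_m(x) - (β/2) ‖x_m‖²`. -/
noncomputable def Ureg (μp rankW : Fin n → Fin n → ℝ) (β : ℝ) (x : Fin n → Fin n → ℝ)
    (m : Fin n) : ℝ :=
  uWL μp rankW x m - β/2 * ∑ w, (x m w)^2

/-- The matrix `Q^w = Aᵀ + A + 2βI`, where `A_{mk} = μ_{mw} 𝟏{k >_w m}`. -/
noncomputable def Qw (μp rankW : Fin n → Fin n → ℝ) (β : ℝ) (w m k : Fin n) : ℝ :=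
  (if rankW w m < rankW w k then μp m w else 0) +
    (if rankW w k < rankW w m then μp k w else 0) +
    (if m = k then 2*β else 0)

section Pairs

variable {ι α : Type*} [Fintype ι] [LinearOrder α]

theorem two_mul_sum_ordered_pairs_le_sq (r : ι → α) (f : ι → ℝ) (hf : ∀ i, 0 ≤ f i) :
    2 * ∑ i, ∑ j ∈ univ.filter (fun j => r i < r j), f i * f j ≤ (∑ i, f i) ^ 2 := by
  have hswap : ∑ i, ∑ j ∈ univ.filter (fun j => r i < r j), f i * f j
      = ∑ i, ∑ j ∈ univ.filter (fun j => r j < r i), f i * f j := by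
    simp_rw [sum_filter]
    rw [sum_comm]
    exact sum_congr rfl fun i _ => sum_congr rfl fun j _ => by rw [mul_comm]
  rw [two_mul, sq, sum_mul_sum]
  nth_rewrite 2 [hswap]
  rw [← sum_add_distrib]
  refine sum_le_sum fun i _ => ?_
  simp_rw [sum_filter, ← sum_add_distrib]
  refine sum_le_sum fun j _ => ?_
  have hfij := mul_nonneg (hf i) (hf j)
  by_cases hij : r i < r j
  · simp [hij, hij.not_gt]
  · split_ifs <;> linarith

theorem two_mul_abs_sum_mul_sum_ordered_le (r : ι → α) (a d : ι → ℝ) {M : ℝ} (hM : 0 ≤ M)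
    (ha : ∀ i, |a i| ≤ M) :
    2 * |∑ i, a i * (d i * ∑ j ∈ univ.filter (fun j => r i < r j), d j)|
      ≤ M * (Fintype.card ι * ∑ i, d i ^ 2) := by
  calc 2 * |∑ i, a i * (d i * ∑ j ∈ univ.filter (fun j => r i < r j), d j)|
      ≤ 2 * ∑ i, M * ∑ j ∈ univ.filter (fun j => r i < r j), |d i| * |d j| := by
        gcongr
        refine (abs_sum_le_sum_abs _ _).trans (sum_le_sum fun i _ => ?_)
        rw [abs_mul, abs_mul, ← mul_sum]
        gcongr
        · exact ha i
        · exact abs_sum_le_sum_abs _ _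
    _ = M * (2 * ∑ i, ∑ j ∈ univ.filter (fun j => r i < r j), |d i| * |d j|) := by
        rw [← mul_sum]; ring
    _ ≤ M * (∑ i, |d i|) ^ 2 := by
        gcongr
        exact two_mul_sum_ordered_pairs_le_sq r _ fun i => abs_nonneg (d i)
    _ ≤ M * (Fintype.card ι * ∑ i, d i ^ 2) := by
        gcongr
        simpa using sq_sum_le_card_mul_sum_sq (s := univ) (f := fun i => |d i|)

end Pairs

theorem Qw_quadForm (μp rankW : Fin n → Fin n → ℝ) (β : ℝ) (w : Fin n) (d : Fin n → ℝ) :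
    ∑ m, ∑ k, d m * Qw μp rankW β w m k * d k
      = 2 * (∑ m, μp m w * (d m * ∑ k ∈ better rankW w m, d k) + β * ∑ m, d m ^ 2) := by
  have hupper : ∑ m, ∑ k, (if rankW w m < rankW w k then μp m w * (d m * d k) else 0)
      = ∑ m, μp m w * (d m * ∑ k ∈ better rankW w m, d k) := by
    refine sum_congr rfl fun m _ => ?_
    rw [better, sum_filter, mul_sum, mul_sum]
    exact sum_congr rfl fun k _ => by split_ifs <;> simp
  have hlower : ∑ m, ∑ k, (if rankW w k < rankW w m then μp k w * (d m * d k) else 0)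
      = ∑ m, ∑ k, (if rankW w m < rankW w k then μp m w * (d m * d k) else 0) := by
    rw [sum_comm]
    exact sum_congr rfl fun m _ => sum_congr rfl fun k _ => by rw [mul_comm (d k)]
  have hdiag : ∑ m, ∑ k, (if m = k then 2 * β * (d m * d k) else 0) = 2 * β * ∑ m, d m ^ 2 := by
    simp [mul_sum, sq]
  calc ∑ m, ∑ k, d m * Qw μp rankW β w m k * d k
      = ∑ m, ∑ k, ((if rankW w m < rankW w k then μp m w * (d m * d k) else 0)
          + (if rankW w k < rankW w m then μp k w * (d m * d k) else 0)
          + (if m = k then 2 * β * (d m * d k) else 0)) := by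
        refine sum_congr rfl fun m _ => sum_congr rfl fun k _ => ?_
        simp only [Qw]
        split_ifs <;> ring
    _ = _ := by
        simp only [sum_add_distrib]
        rw [hlower, hupper, hdiag]
        ring

theorem Qw_quadForm_nonneg (μp rankW : Fin n → Fin n → ℝ) {β M : ℝ} (w : Fin n)
    (hM : 0 ≤ M) (hμ : ∀ m, |μp m w| ≤ M) (hβ : n * M ≤ 2 * β) (d : Fin n → ℝ) :
    0 ≤ ∑ m, ∑ k, d m * Qw μp rankW β w m k * d k := by
  have hbound : 2 * |∑ m, μp m w * (d m * ∑ k ∈ better rankW w m, d k)|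
      ≤ M * (n * ∑ m, d m ^ 2) := by
    have h := two_mul_abs_sum_mul_sum_ordered_le (rankW w) (fun m => μp m w) d hM hμ
    rw [Fintype.card_fin] at h
    exact h
  have hY : 0 ≤ ∑ m, d m ^ 2 := sum_nonneg fun m _ => sq_nonneg (d m)
  rw [Qw_quadForm]
  nlinarith [neg_abs_le (∑ m, μp m w * (d m * ∑ k ∈ better rankW w m, d k)),
    mul_le_mul_of_nonneg_right hβ hY]

/-- The gradient `F(x)`, `F(x)_{mw} = ∂U_m/∂x_{mw}`. -/
noncomputable def gradUreg (μp rankW : Fin n → Fin n → ℝ) (β : ℝ) (x : Fin n → Fin n → ℝ)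
    (m w : Fin n) : ℝ :=
  μp m w * (1 - ∑ k ∈ better rankW w m, x k w) - β * x m w

theorem self_notMem_better (rankW : Fin n → Fin n → ℝ) (w m : Fin n) :
    m ∉ better rankW w m := by
  simp [better]

theorem hasDerivAt_Ureg_update (μp rankW : Fin n → Fin n → ℝ) (β : ℝ)
    (x : Fin n → Fin n → ℝ) (m w : Fin n) :
    HasDerivAt (fun s : ℝ => Ureg μp rankW β (Function.update x m (Function.update (x m) w s)) m)
      (gradUreg μp rankW β x m w) (x m w) := by
  have hcoord := hasDerivAt_pi.1 (hasDerivAt_update (x m) w (x m w))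
  have hothers : ∀ s w', ∑ k ∈ better rankW w' m, Function.update x m (Function.update (x m) w s) k w'
      = ∑ k ∈ better rankW w' m, x k w' := fun s w' =>
    sum_congr rfl fun k hk => by
      rw [Function.update_of_ne (ne_of_mem_of_not_mem hk (self_notMem_better rankW w' m))]
  have hderiv := (HasDerivAt.fun_sum (u := univ) fun w' _ =>
      (hcoord w').const_mul (μp m w' * (1 - ∑ k ∈ better rankW w' m, x k w'))).fun_sub
    ((HasDerivAt.fun_sum (u := univ) fun w' _ => (hcoord w').fun_pow 2).const_mul (β / 2))
  have hUreg : (fun s : ℝ => Ureg μp rankW β (Function.update x m (Function.update (x m) w s)) m)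
      = fun s => ∑ w', μp m w' * (1 - ∑ k ∈ better rankW w' m, x k w') * Function.update (x m) w s w'
        - β / 2 * ∑ w', Function.update (x m) w s w' ^ 2 :=
    funext fun s => by simp only [Ureg, uWL, hothers, Function.update_self]
  rw [hUreg]
  refine hderiv.congr_deriv ?_
  simp only [Pi.single_apply, mul_ite, mul_one, mul_zero, sum_ite_eq', mem_univ, ↓reduceIte,
    Nat.cast_ofNat, Function.update_eq_self, Nat.add_one_sub_one, pow_one, gradUreg, sub_right_inj]
  ring

theorem sum_mul_sub_gradUreg (μp rankW : Fin n → Fin n → ℝ) (β : ℝ) (x x' : Fin n → Fin n → ℝ) :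
    ∑ m, ∑ w, (x' m w - x m w) * (gradUreg μp rankW β x' m w - gradUreg μp rankW β x m w)
      = -(1/2) * ∑ w, ∑ m, ∑ k, (x' m w - x m w) * Qw μp rankW β w m k * (x' k w - x k w) := by
  simp only [Qw_quadForm]
  rw [mul_sum, sum_comm]
  refine sum_congr rfl fun w _ => ?_
  calc ∑ m, (x' m w - x m w) * (gradUreg μp rankW β x' m w - gradUreg μp rankW β x m w)
      = ∑ m, (-(μp m w * ((x' m w - x m w) * ∑ k ∈ better rankW w m, (x' k w - x k w)))
          - β * (x' m w - x m w) ^ 2) :=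
        sum_congr rfl fun m _ => by simp only [gradUreg, sum_sub_distrib]; ring
    _ = _ := by rw [sum_sub_distrib, sum_neg_distrib, ← mul_sum]; ring

theorem le_muMax (μp : Fin n → Fin n → ℝ) (m w : Fin n) : μp m w ≤ muMax μp :=
  le_csSup ((Set.finite_range (Function.uncurry μp)).subset
    (by rintro _ ⟨m, w, rfl⟩; exact ⟨(m, w), rfl⟩)).bddAbove ⟨m, w, rfl⟩

theorem muMax_nonneg {μp : Fin n → Fin n → ℝ} (hμ : ∀ m w, 0 ≤ μp m w) : 0 ≤ muMax μp :=
  Real.sSup_nonneg (by rintro _ ⟨m, w, rfl⟩; exact hμ m w)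

theorem regularized_waiting_list_monotone_general {n : ℕ} (μp rankW : Fin n → Fin n → ℝ)
    (hμ : ∀ m w, μp m w ∈ Set.Ioc (0:ℝ) 1)
    (β : ℝ)
    (Fr : (Fin n → Fin n → ℝ) → Fin n → Fin n → ℝ)
    (hFr : ∀ (x : Fin n → Fin n → ℝ) (m w : Fin n),
      HasDerivAt
        (fun s : ℝ => Ureg μp rankW β (Function.update x m (Function.update (x m) w s)) m)
        (Fr x m w) (x m w)) :
    ∀ x x' : Fin n → Fin n → ℝ, (∀ m, IsStrategy (x m)) → (∀ m, IsStrategy (x' m)) →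
      (∑ m, ∑ w, (x' m w - x m w) * (Fr x' m w - Fr x m w)
          = -(1/2) * ∑ w, ∑ m, ∑ k, (x' m w - x m w) * Qw μp rankW β w m k * (x' k w - x k w)) ∧
        (n * muMax μp / 2 < β →
          ∑ m, ∑ w, (x' m w - x m w) * (Fr x' m w - Fr x m w) ≤ 0) := by
  obtain rfl : Fr = gradUreg μp rankW β := funext fun x => funext fun m => funext fun w =>
    (hFr x m w).unique (hasDerivAt_Ureg_update μp rankW β x m w)
  intro x x' _ _
  refine ⟨sum_mul_sub_gradUreg μp rankW β x x', fun hβ => ?_⟩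
  have hμ_abs : ∀ m w, |μp m w| ≤ muMax μp := fun m w => by
    rw [abs_of_pos (hμ m w).1]
    exact le_muMax μp m w
  have hQ : ∀ w, 0 ≤ ∑ m, ∑ k, (x' m w - x m w) * Qw μp rankW β w m k * (x' k w - x k w) :=
    fun w => Qw_quadForm_nonneg μp rankW w (muMax_nonneg fun m w => (hμ m w).1.le)
      (fun m => hμ_abs m w) (by linarith) _
  rw [sum_mul_sub_gradUreg]
  linarith [sum_nonneg fun w (_ : w ∈ univ) => hQ w]

/-- Theorem 7: the regularized waiting-list stable matching game satisfies
`(x'-x)ᵀ(F(x')-F(x)) = -(1/2)∑_w (x'_w-x_w)ᵀ Q^w (x'_w-x_w)`; in particular it is a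
monotone game whenever `β > n μ_max / 2`. -/
theorem regularized_waiting_list_monotone {n : ℕ} (μp rankW : Fin n → Fin n → ℝ)
    (hμ : ∀ m w, μp m w ∈ Set.Ioc (0:ℝ) 1)
    (hrank : ∀ w, Function.Injective (rankW w))
    (β : ℝ) (hβpos : 0 < β)
    (Fr : (Fin n → Fin n → ℝ) → Fin n → Fin n → ℝ)
    (hFr : ∀ (x : Fin n → Fin n → ℝ) (m w : Fin n),
      HasDerivAt
        (fun s : ℝ => Ureg μp rankW β (Function.update x m (Function.update (x m) w s)) m)
        (Fr x m w) (x m w)) :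
    ∀ x x' : Fin n → Fin n → ℝ, (∀ m, IsStrategy (x m)) → (∀ m, IsStrategy (x' m)) →
      (∑ m, ∑ w, (x' m w - x m w) * (Fr x' m w - Fr x m w)
          = -(1/2) * ∑ w, ∑ m, ∑ k, (x' m w - x m w) * Qw μp rankW β w m k * (x' k w - x k w)) ∧
        (n * muMax μp / 2 < β →
          ∑ m, ∑ w, (x' m w - x m w) * (Fr x' m w - Fr x m w) ≤ 0) :=
  regularized_waiting_list_monotone_general μp rankW hμ β Fr hFr

end SM
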